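/- Let p be a prime, let (S, σ, τ) and (S', σ', τ') be frames, and let φ : S → S' be a morphism of frames, i.e. a homomorphism of graded rings with σ' ∘ φ = φ ∘ σ and τ' ∘ φ = φ ∘ τ. Assume that for every finitely generated projective S₀-module N the natural map N → N ⊗_{S₀} S'₀ is injective. Let (M, F) and (M', F') be displays over (S, σ, τ) and let ψ : M → M' be a homomorphism of graded S-modules. Then ψ is a morphism of displays (i.e. τ*ψ ∘ F = F' ∘ ψ as σ-semilinear maps M → τ*M') if and only if the base change ψ ⊗ id_{S'} : M ⊗_S S' → M' ⊗_S S' is a morphism of the base-changed displays over (S', σ', τ'). -/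
import Mathlib


open TensorProduct

universe u v w

/-- A *frame* `(S, σ, τ)`: a ℤ-graded commutative ring `S = ⨁ₙ Sₙ` with ring
homomorphisms `σ, τ : S → S₀` (ring endomorphisms landing in `𝒜 0`) such that `τ` is
the identity on `S₀` and a bijection `S₋ₙ → S₀` for `n ≥ 1`; `σ` induces the
`p`-power Frobenius on `S₀/pS₀` and `σ t = p` for the unique `t ∈ S₋₁` with
`τ t = 1`; and `p` lies in the Jacobson radical of `S₀`. -/
structure Frame (p : ℕ) {A : Type*} [CommRing A] (𝒜 : ℤ → AddSubgroup A)
    [GradedRing 𝒜] where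
  sigma : A →+* A
  tau : A →+* A
  sigma_mem_zero : ∀ a : A, sigma a ∈ 𝒜 0
  tau_mem_zero : ∀ a : A, tau a ∈ 𝒜 0
  tau_id_zero : ∀ a ∈ 𝒜 0, tau a = a
  tau_inj_neg : ∀ n : ℕ, 1 ≤ n → ∀ a ∈ 𝒜 (-(n : ℤ)), ∀ b ∈ 𝒜 (-(n : ℤ)),
    tau a = tau b → a = b
  tau_surj_neg : ∀ n : ℕ, 1 ≤ n → ∀ c ∈ 𝒜 0, ∃ a ∈ 𝒜 (-(n : ℤ)), tau a = c
  sigma_frob : ∀ a ∈ 𝒜 0, ∃ b ∈ 𝒜 0, sigma a = a ^ p + (p : A) * b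
  sigma_t : ∀ t ∈ 𝒜 (-1 : ℤ), tau t = 1 → sigma t = (p : A)
  p_rad : ∀ y ∈ 𝒜 0, ∃ z ∈ 𝒜 0, (1 - (p : A) * y) * z = 1

section Tw

variable {A : Type u} [CommRing A] (𝒜 : ℤ → AddSubgroup A) [GradedRing 𝒜]

/-- The degree-zero subring `S₀ = 𝒜 0` of the graded ring `S`, regarded as a ring:
one copy for each ring homomorphism `f : S → S₀`, carrying the `S`-algebra structure
determined by `f`.  For a graded `S`-module `M`, the base change
`f*M = S₀ ⊗_{S,f} M` is then realized as `Tw 𝒜 f hf ⊗[S] M`. -/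
def Tw (f : A →+* A) (_hf : ∀ a : A, f a ∈ 𝒜 0) : Type u :=
  ↥(SetLike.GradeZero.subring 𝒜)

variable (f g : A →+* A) (hf : ∀ a : A, f a ∈ 𝒜 0) (hg : ∀ a : A, g a ∈ 𝒜 0)

instance : CommRing (Tw 𝒜 f hf) :=
  inferInstanceAs (CommRing ↥(SetLike.GradeZero.subring 𝒜))

/-- The corestriction `S → S₀` of `f`. -/
def twMap : A →+* Tw 𝒜 f hf :=
  f.codRestrict (SetLike.GradeZero.subring 𝒜) fun a => hf a

instance : Algebra A (Tw 𝒜 f hf) := (twMap 𝒜 f hf).toAlgebra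

/-- The identity of `S₀`, viewed as a ring homomorphism between the two copies of
`S₀` attached to `f` and to `g`. -/
def twId : Tw 𝒜 f hf →+* Tw 𝒜 g hg :=
  RingHom.id ↥(SetLike.GradeZero.subring 𝒜)

/-- The element of `S` underlying an element of a twisted copy of `S₀`. -/
def twVal (s : Tw 𝒜 f hf) : A := s.val

end Tw

/-- A *display* `(M, F)` over the frame `(S, σ, τ)` : a finitely generated projective
graded `S`-module `M` together with a `σ`-semilinear map `F : M → τ*M` whose
linearization `F♯ : σ*M → τ*M` is bijective.  It is encoded here by the
linearization `Psi = F♯`, an `S₀`-linear bijection `σ*M → τ*M`; the semilinear map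
`F` is recovered as `m ↦ Psi (1 ⊗ m)`. -/
structure Display {p : ℕ} {A : Type u} [CommRing A] (𝒜 : ℤ → AddSubgroup A)
    [GradedRing 𝒜] (F : Frame p 𝒜) (M : Type u) [AddCommGroup M] [Module A M] where
  grading : ℤ → AddSubgroup M
  isInternal : DirectSum.IsInternal grading
  gradedSMul : ∀ (i j : ℤ), ∀ a ∈ 𝒜 i, ∀ x ∈ grading j, a • x ∈ grading (i + j)
  finite : Module.Finite A M
  projective : Module.Projective A M
  Psi : (Tw 𝒜 F.sigma F.sigma_mem_zero ⊗[A] M)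
    →ₛₗ[twId 𝒜 F.sigma F.tau F.sigma_mem_zero F.tau_mem_zero]
      (Tw 𝒜 F.tau F.tau_mem_zero ⊗[A] M)
  bijective : Function.Bijective Psi

section Aux

variable {A : Type u} {A' : Type u} [CommRing A] [CommRing A']
variable (𝒜 : ℤ → AddSubgroup A) [GradedRing 𝒜] (𝒜' : ℤ → AddSubgroup A') [GradedRing 𝒜']
variable [Algebra A A']
variable (f : A →+* A) (hf : ∀ a : A, f a ∈ 𝒜 0)
variable (f' : A' →+* A') (hf' : ∀ a : A', f' a ∈ 𝒜' 0)
variable [Algebra (Tw 𝒜 f hf) (Tw 𝒜' f' hf')]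
variable {M₂ : Type u} [AddCommGroup M₂] [Module A M₂]

lemma twVal_twMap (a : A) : twVal 𝒜 f hf (twMap 𝒜 f hf a) = f a := rfl

lemma twVal_injective : Function.Injective (twVal 𝒜 f hf) :=
  fun _ _ h => Subtype.ext h

lemma twVal_mul (x y : Tw 𝒜 f hf) :
    twVal 𝒜 f hf (x * y) = twVal 𝒜 f hf x * twVal 𝒜 f hf y := rfl

lemma twMap_algebraMap
    (halg : ∀ x : Tw 𝒜 f hf,
      twVal 𝒜' f' hf' (algebraMap (Tw 𝒜 f hf) (Tw 𝒜' f' hf') x)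
        = algebraMap A A' (twVal 𝒜 f hf x))
    (hcomp : ∀ a : A, f' (algebraMap A A' a) = algebraMap A A' (f a)) (a : A) :
    twMap 𝒜' f' hf' (algebraMap A A' a)
      = algebraMap (Tw 𝒜 f hf) (Tw 𝒜' f' hf') (twMap 𝒜 f hf a) := by
  apply twVal_injective 𝒜' f' hf'
  rw [twVal_twMap, halg, twVal_twMap, hcomp]

/-- The inner bilinear (additive) map used to build `eAux`. -/
noncomputable def gAuxFun : A' →+ M₂ →+ (Tw 𝒜' f' hf' ⊗[Tw 𝒜 f hf] (Tw 𝒜 f hf ⊗[A] M₂)) where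
  toFun a' := AddMonoidHom.mk'
    (fun m₂ => twMap 𝒜' f' hf' a' ⊗ₜ[Tw 𝒜 f hf] ((1 : Tw 𝒜 f hf) ⊗ₜ[A] m₂))
    (by intro m n; rw [tmul_add, tmul_add])
  map_zero' := by
    ext m; simp only [AddMonoidHom.mk'_apply, map_zero, zero_tmul, AddMonoidHom.zero_apply]
  map_add' := by
    intro a b; ext m
    simp only [AddMonoidHom.mk'_apply, map_add, add_tmul, AddMonoidHom.add_apply]

/-- The map `τ'*(M_{S'}) → S'₀ ⊗_{S₀} τ*M` (as an additive map). -/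
noncomputable def gAux
    (halg : ∀ x : Tw 𝒜 f hf,
      twVal 𝒜' f' hf' (algebraMap (Tw 𝒜 f hf) (Tw 𝒜' f' hf') x)
        = algebraMap A A' (twVal 𝒜 f hf x))
    (hcomp : ∀ a : A, f' (algebraMap A A' a) = algebraMap A A' (f a)) :
    (A' ⊗[A] M₂) →+ (Tw 𝒜' f' hf' ⊗[Tw 𝒜 f hf] (Tw 𝒜 f hf ⊗[A] M₂)) :=
  TensorProduct.liftAddHom (gAuxFun 𝒜 𝒜' f hf f' hf') (by
    intro a a' m₂
    simp only [gAuxFun, AddMonoidHom.coe_mk, ZeroHom.coe_mk, AddMonoidHom.mk'_apply]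
    have hn : (1 : Tw 𝒜 f hf) ⊗ₜ[A] (a • m₂) = twMap 𝒜 f hf a ⊗ₜ[A] m₂ := by
      rw [tmul_smul, smul_tmul', Algebra.smul_def,
        show algebraMap A (Tw 𝒜 f hf) = twMap 𝒜 f hf from rfl, mul_one]
    have hsm : twMap 𝒜 f hf a • ((1 : Tw 𝒜 f hf) ⊗ₜ[A] m₂)
        = twMap 𝒜 f hf a ⊗ₜ[A] m₂ := by
      rw [smul_tmul', smul_eq_mul, mul_one]
    rw [Algebra.smul_def a a', map_mul, twMap_algebraMap 𝒜 𝒜' f hf f' hf' halg hcomp,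
      ← Algebra.smul_def, smul_tmul, hsm, hn])

lemma gAux_tmul (halg) (hcomp) (a' : A') (m₂ : M₂) :
    gAux 𝒜 𝒜' f hf f' hf' (M₂ := M₂) halg hcomp (a' ⊗ₜ[A] m₂)
      = twMap 𝒜' f' hf' a' ⊗ₜ[Tw 𝒜 f hf] ((1 : Tw 𝒜 f hf) ⊗ₜ[A] m₂) :=
  TensorProduct.liftAddHom_tmul _ _ _ _

lemma gAux_smul (halg) (hcomp) (a' : A') (x : A' ⊗[A] M₂) :
    gAux 𝒜 𝒜' f hf f' hf' (M₂ := M₂) halg hcomp (a' • x)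
      = twMap 𝒜' f' hf' a' • gAux 𝒜 𝒜' f hf f' hf' (M₂ := M₂) halg hcomp x := by
  induction x using TensorProduct.induction_on with
  | zero => simp only [smul_zero, map_zero]
  | tmul b' m₂ =>
      rw [smul_tmul', smul_eq_mul, gAux_tmul, gAux_tmul, map_mul, smul_tmul',
        smul_eq_mul]
  | add x y hx hy => rw [smul_add, map_add, map_add, hx, hy, smul_add]

/-- The map `τ'*(M_{S'}) → S'₀ ⊗_{S₀} τ*M` (as an additive map). -/
noncomputable def eAux
    (halg : ∀ x : Tw 𝒜 f hf,
      twVal 𝒜' f' hf' (algebraMap (Tw 𝒜 f hf) (Tw 𝒜' f' hf') x)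
        = algebraMap A A' (twVal 𝒜 f hf x))
    (hcomp : ∀ a : A, f' (algebraMap A A' a) = algebraMap A A' (f a)) :
    (Tw 𝒜' f' hf' ⊗[A'] (A' ⊗[A] M₂))
      →+ (Tw 𝒜' f' hf' ⊗[Tw 𝒜 f hf] (Tw 𝒜 f hf ⊗[A] M₂)) :=
  TensorProduct.liftAddHom
    ({ toFun := fun t' => AddMonoidHom.mk'
        (fun x => t' • gAux 𝒜 𝒜' f hf f' hf' (M₂ := M₂) halg hcomp x)
        (by intro x y; rw [map_add, smul_add])
       map_zero' := by ext x; simp only [AddMonoidHom.mk'_apply, zero_smul,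
         AddMonoidHom.zero_apply]
       map_add' := by intro s t; ext x; simp only [AddMonoidHom.mk'_apply,
         add_smul, AddMonoidHom.add_apply] })
    (by
      intro a' t' x
      simp only [AddMonoidHom.coe_mk, ZeroHom.coe_mk, AddMonoidHom.mk'_apply]
      rw [gAux_smul, Algebra.smul_def a' t',
        show algebraMap A' (Tw 𝒜' f' hf') = twMap 𝒜' f' hf' from rfl, mul_comm,
        mul_smul])

lemma eAux_tmul (halg) (hcomp) (t' : Tw 𝒜' f' hf') (x : A' ⊗[A] M₂) :
    eAux 𝒜 𝒜' f hf f' hf' (M₂ := M₂) halg hcomp (t' ⊗ₜ[A'] x)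
      = t' • gAux 𝒜 𝒜' f hf f' hf' (M₂ := M₂) halg hcomp x :=
  TensorProduct.liftAddHom_tmul _ _ _ _

lemma eAux_comp (halg) (hcomp) (hfid : ∀ a ∈ 𝒜 0, f a = a)
    (Θ : (Tw 𝒜 f hf ⊗[A] M₂) →+ (Tw 𝒜' f' hf' ⊗[A'] (A' ⊗[A] M₂)))
    (hΘ : ∀ (s : Tw 𝒜 f hf) (m₂ : M₂),
      Θ (s ⊗ₜ[A] m₂) = (twMap 𝒜' f' hf' (algebraMap A A' (twVal 𝒜 f hf s)))
        ⊗ₜ[A'] ((1 : A') ⊗ₜ[A] m₂))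
    (w : Tw 𝒜 f hf ⊗[A] M₂) :
    eAux 𝒜 𝒜' f hf f' hf' (M₂ := M₂) halg hcomp (Θ w)
      = (1 : Tw 𝒜' f' hf') ⊗ₜ[Tw 𝒜 f hf] w := by
  induction w using TensorProduct.induction_on with
  | zero => simp only [map_zero, tmul_zero]
  | tmul s m₂ =>
      have hs : twMap 𝒜 f hf (twVal 𝒜 f hf s) = s := by
        apply twVal_injective 𝒜 f hf
        rw [twVal_twMap]
        exact hfid _ s.2
      rw [hΘ, eAux_tmul, gAux_tmul, map_one,
        twMap_algebraMap 𝒜 𝒜' f hf f' hf' halg hcomp, hs,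
        smul_tmul', smul_eq_mul, mul_one, Algebra.algebraMap_eq_smul_one, smul_tmul,
        smul_tmul', smul_eq_mul, mul_one]
  | add x y hx hy => rw [map_add, map_add, hx, hy, tmul_add]

end Aux

/-- **Statement 12.** Let `p` be a prime, `(S, σ, τ)` and `(S', σ', τ')` frames, and
`φ : S → S'` a morphism of frames (a graded ring homomorphism with `σ' ∘ φ = φ ∘ σ`
and `τ' ∘ φ = φ ∘ τ`).  Assume that for every finitely generated projective
`S₀`-module `N` the natural map `N → N ⊗_{S₀} S'₀` is injective.  Let `(M, F)` and
`(M', F')` be displays over `(S, σ, τ)` and `ψ : M → M'` a homomorphism of graded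
`S`-modules.  Then `ψ` is a morphism of displays (`τ*ψ ∘ F = F' ∘ ψ`) if and only if
its base change `ψ ⊗ id : M ⊗_S S' → M' ⊗_S S'` is a morphism of the base-changed
displays over `(S', σ', τ')`.

Here `φ` is packaged as the algebra map of an `S`-algebra structure on `S'`; the base
change `M_{S'} = S' ⊗_S M` carries the display structure maps `Ψ_{S'}` (and `Ψ'_{S'}`
for `M'`), which are pinned down on simple tensors by
`Ψ_{S'}(s' ⊗ (a' ⊗ m)) = (s'·σ'(a')) • θ(Ψ(1 ⊗ m))` where the canonical map
`θ : τ*M → τ'*(M_{S'})` satisfies `θ(s ⊗ m) = φ(s) ⊗ (1 ⊗ m)`. -/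
theorem displayMorphism_iff_baseChange_displayMorphism {p : ℕ} (hp : p.Prime)
    {A : Type u} [CommRing A] (𝒜 : ℤ → AddSubgroup A) [GradedRing 𝒜]
    (F : Frame p 𝒜)
    {A' : Type u} [CommRing A'] (𝒜' : ℤ → AddSubgroup A') [GradedRing 𝒜']
    (F' : Frame p 𝒜')
    -- the frame morphism `φ : S → S'`:
    [Algebra A A']
    (hφgraded : ∀ n : ℤ, ∀ a ∈ 𝒜 n, algebraMap A A' a ∈ 𝒜' n)
    (hφσ : ∀ a : A, F'.sigma (algebraMap A A' a) = algebraMap A A' (F.sigma a))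
    (hφτ : ∀ a : A, F'.tau (algebraMap A A' a) = algebraMap A A' (F.tau a))
    -- `N → N ⊗_{S₀} S'₀` is injective for all finitely generated projective
    -- `S₀`-modules `N`:
    [Algebra (↥(SetLike.GradeZero.subring 𝒜)) (↥(SetLike.GradeZero.subring 𝒜'))]
    (halg₀ : ∀ x : ↥(SetLike.GradeZero.subring 𝒜),
      ((algebraMap (↥(SetLike.GradeZero.subring 𝒜))
          (↥(SetLike.GradeZero.subring 𝒜')) x : A') = algebraMap A A' (x : A)))
    (hinj : ∀ (N : Type u) [AddCommGroup N]
      [Module (↥(SetLike.GradeZero.subring 𝒜)) N],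
      Module.Finite (↥(SetLike.GradeZero.subring 𝒜)) N →
      Module.Projective (↥(SetLike.GradeZero.subring 𝒜)) N →
      Function.Injective (fun n : N =>
        ((1 : ↥(SetLike.GradeZero.subring 𝒜')) ⊗ₜ[↥(SetLike.GradeZero.subring 𝒜)] n)))
    -- the displays `(M, F)`, `(M', F')` and the graded homomorphism `ψ`:
    {M : Type u} [AddCommGroup M] [Module A M] (D : Display 𝒜 F M)
    {M' : Type u} [AddCommGroup M'] [Module A M'] (D' : Display 𝒜 F M')
    (ψ : M →ₗ[A] M')
    (hψgraded : ∀ n : ℤ, ∀ x ∈ D.grading n, ψ x ∈ D'.grading n)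
    -- the canonical maps `θ : τ*M → τ'*(M_{S'})`, `θ' : τ*M' → τ'*(M'_{S'})`:
    (θ : (Tw 𝒜 F.tau F.tau_mem_zero ⊗[A] M) →+
      (Tw 𝒜' F'.tau F'.tau_mem_zero ⊗[A'] (A' ⊗[A] M)))
    (hθ : ∀ (s : Tw 𝒜 F.tau F.tau_mem_zero) (m : M),
      θ (s ⊗ₜ[A] m) =
        (twMap 𝒜' F'.tau F'.tau_mem_zero
            (algebraMap A A' (twVal 𝒜 F.tau F.tau_mem_zero s)))
          ⊗ₜ[A'] ((1 : A') ⊗ₜ[A] m))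
    (θ' : (Tw 𝒜 F.tau F.tau_mem_zero ⊗[A] M') →+
      (Tw 𝒜' F'.tau F'.tau_mem_zero ⊗[A'] (A' ⊗[A] M')))
    (hθ' : ∀ (s : Tw 𝒜 F.tau F.tau_mem_zero) (m' : M'),
      θ' (s ⊗ₜ[A] m') =
        (twMap 𝒜' F'.tau F'.tau_mem_zero
            (algebraMap A A' (twVal 𝒜 F.tau F.tau_mem_zero s)))
          ⊗ₜ[A'] ((1 : A') ⊗ₜ[A] m'))
    -- the linearizations of the base-changed displays:
    (ΨM : (Tw 𝒜' F'.sigma F'.sigma_mem_zero ⊗[A'] (A' ⊗[A] M))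
      →ₛₗ[twId 𝒜' F'.sigma F'.tau F'.sigma_mem_zero F'.tau_mem_zero]
        (Tw 𝒜' F'.tau F'.tau_mem_zero ⊗[A'] (A' ⊗[A] M)))
    (hΨM : ∀ (s' : Tw 𝒜' F'.sigma F'.sigma_mem_zero) (a' : A') (m : M),
      ΨM (s' ⊗ₜ[A'] (a' ⊗ₜ[A] m)) =
        (twId 𝒜' F'.sigma F'.tau F'.sigma_mem_zero F'.tau_mem_zero
            (s' * twMap 𝒜' F'.sigma F'.sigma_mem_zero a'))
          • θ (D.Psi ((1 : Tw 𝒜 F.sigma F.sigma_mem_zero) ⊗ₜ[A] m)))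
    (ΨM' : (Tw 𝒜' F'.sigma F'.sigma_mem_zero ⊗[A'] (A' ⊗[A] M'))
      →ₛₗ[twId 𝒜' F'.sigma F'.tau F'.sigma_mem_zero F'.tau_mem_zero]
        (Tw 𝒜' F'.tau F'.tau_mem_zero ⊗[A'] (A' ⊗[A] M')))
    (hΨM' : ∀ (s' : Tw 𝒜' F'.sigma F'.sigma_mem_zero) (a' : A') (m' : M'),
      ΨM' (s' ⊗ₜ[A'] (a' ⊗ₜ[A] m')) =
        (twId 𝒜' F'.sigma F'.tau F'.sigma_mem_zero F'.tau_mem_zero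
            (s' * twMap 𝒜' F'.sigma F'.sigma_mem_zero a'))
          • θ' (D'.Psi ((1 : Tw 𝒜 F.sigma F.sigma_mem_zero) ⊗ₜ[A] m'))) :
    -- `ψ` is a morphism of displays iff its base change is:
    (∀ m : M,
        (LinearMap.baseChange (Tw 𝒜 F.tau F.tau_mem_zero) ψ)
            (D.Psi ((1 : Tw 𝒜 F.sigma F.sigma_mem_zero) ⊗ₜ[A] m))
          = D'.Psi ((1 : Tw 𝒜 F.sigma F.sigma_mem_zero) ⊗ₜ[A] ψ m)) ↔
      (∀ x : A' ⊗[A] M,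
        (LinearMap.baseChange (Tw 𝒜' F'.tau F'.tau_mem_zero)
            (LinearMap.baseChange A' ψ))
            (ΨM ((1 : Tw 𝒜' F'.sigma F'.sigma_mem_zero) ⊗ₜ[A'] x))
          = ΨM' ((1 : Tw 𝒜' F'.sigma F'.sigma_mem_zero) ⊗ₜ[A']
              (LinearMap.baseChange A' ψ x))) := by
  letI : Algebra (Tw 𝒜 F.tau F.tau_mem_zero) (Tw 𝒜' F'.tau F'.tau_mem_zero) :=
    ‹Algebra (↥(SetLike.GradeZero.subring 𝒜)) (↥(SetLike.GradeZero.subring 𝒜'))›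
  have halg : ∀ x : Tw 𝒜 F.tau F.tau_mem_zero,
      twVal 𝒜' F'.tau F'.tau_mem_zero
          (algebraMap (Tw 𝒜 F.tau F.tau_mem_zero) (Tw 𝒜' F'.tau F'.tau_mem_zero) x)
        = algebraMap A A' (twVal 𝒜 F.tau F.tau_mem_zero x) := fun x => halg₀ x
  have key : ∀ w : Tw 𝒜 F.tau F.tau_mem_zero ⊗[A] M,
      (LinearMap.baseChange (Tw 𝒜' F'.tau F'.tau_mem_zero) (LinearMap.baseChange A' ψ)) (θ w)
        = θ' ((LinearMap.baseChange (Tw 𝒜 F.tau F.tau_mem_zero) ψ) w) := by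
    intro w
    induction w using TensorProduct.induction_on with
    | zero => simp only [map_zero]
    | tmul s m =>
        rw [hθ, LinearMap.baseChange_tmul, LinearMap.baseChange_tmul,
          LinearMap.baseChange_tmul, hθ']
    | add x y hx hy => simp only [map_add, hx, hy]
  constructor
  · intro h x
    induction x using TensorProduct.induction_on with
    | zero => simp only [map_zero, tmul_zero]
    | tmul a' m =>
        rw [hΨM 1 a' m, map_smul, key, h m, LinearMap.baseChange_tmul, hΨM' 1 a' (ψ m)]
    | add x y hx hy =>
        simp only [map_add, tmul_add]
        rw [hx, hy]
  · intro h m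
    have h1 := h ((1 : A') ⊗ₜ[A] m)
    rw [LinearMap.baseChange_tmul] at h1
    rw [hΨM 1 1 m, hΨM' 1 1 (ψ m)] at h1
    simp only [map_one, one_mul, one_smul] at h1
    rw [key] at h1
    have h2 := congrArg
      (eAux 𝒜 𝒜' F.tau F.tau_mem_zero F'.tau F'.tau_mem_zero halg hφτ (M₂ := M')) h1
    rw [eAux_comp 𝒜 𝒜' F.tau F.tau_mem_zero F'.tau F'.tau_mem_zero halg hφτ
        F.tau_id_zero θ' hθ',
      eAux_comp 𝒜 𝒜' F.tau F.tau_mem_zero F'.tau F'.tau_mem_zero halg hφτ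
        F.tau_id_zero θ' hθ'] at h2
    letI : Module.Finite A M' := D'.finite
    letI : Module.Projective A M' := D'.projective
    letI instMod : Module (↥(SetLike.GradeZero.subring 𝒜))
        (Tw 𝒜 F.tau F.tau_mem_zero ⊗[A] M') :=
      inferInstanceAs (Module (Tw 𝒜 F.tau F.tau_mem_zero)
        (Tw 𝒜 F.tau F.tau_mem_zero ⊗[A] M'))
    have fin : Module.Finite (↥(SetLike.GradeZero.subring 𝒜))
        (Tw 𝒜 F.tau F.tau_mem_zero ⊗[A] M') :=
      inferInstanceAs (Module.Finite (Tw 𝒜 F.tau F.tau_mem_zero)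
        (Tw 𝒜 F.tau F.tau_mem_zero ⊗[A] M'))
    have proj : Module.Projective (↥(SetLike.GradeZero.subring 𝒜))
        (Tw 𝒜 F.tau F.tau_mem_zero ⊗[A] M') :=
      inferInstanceAs (Module.Projective (Tw 𝒜 F.tau F.tau_mem_zero)
        (Tw 𝒜 F.tau F.tau_mem_zero ⊗[A] M'))
    exact hinj (Tw 𝒜 F.tau F.tau_mem_zero ⊗[A] M') fin proj h2
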